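/- arXiv:1104.2911 — 2 statements merged into one kernel-verified Lean document; each statement's English description precedes it below -/
import Mathlib

section
/- Let A be a compact infinite metric space carrying an upper α-regular measure μ with μ(A) > 0 and upper regularity constant C₀ (so μ(B(x,r)) ≤ C₀ r^α for all x ∈ A, 0 < r ≤ diam(A)), and let s > α. Then for every N ≥ 2, every N-point configuration ω*_N minimizing the unweighted Riesz s-energy E_s(ω_N) = Σ_{i ≠ j} m(x_i,x_j)^{−s} over N-point subsets of A satisfies δ(ω*_N) ≥ [ (μ(A)/C₀)(1 − α/s) ]^{1/α} · (α/s)^{1/s} · N^{−1/α}. -/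
open Metric MeasureTheory Filter
open scoped ENNReal NNReal

noncomputable section

variable {A : Type*} [MetricSpace A]

/-- The separation distance `δ(ω_N)` of a configuration of `N` points. -/
def sepDist {N : ℕ} (x : Fin N → A) : ℝ :=
  sInf {d : ℝ | ∃ i j : Fin N, i ≠ j ∧ d = dist (x i) (x j)}

/-- The mesh norm (covering radius) `ρ(ω_N, K)` of a configuration with respect to `K`. -/
def meshNorm {N : ℕ} (x : Fin N → A) (K : Set A) : ℝ :=
  sSup {d : ℝ | ∃ y ∈ K, d = ⨅ i : Fin N, dist y (x i)}

/-- The weighted Riesz `(s,w)`-energy of a configuration. -/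
def rieszEnergy {N : ℕ} (s : ℝ) (w : A → A → ℝ) (x : Fin N → A) : ℝ :=
  ∑ i : Fin N, ∑ j : Fin N, if i = j then 0 else w (x i) (x j) / dist (x i) (x j) ^ s

/-- `x` is an `N`-point `(s,w)`-energy minimizing configuration on `K`. -/
def IsEnergyMinimizer {N : ℕ} (s : ℝ) (w : A → A → ℝ) (K : Set A) (x : Fin N → A) : Prop :=
  Function.Injective x ∧ (∀ i, x i ∈ K) ∧
    ∀ y : Fin N → A, Function.Injective y → (∀ i, y i ∈ K) →
      rieszEnergy s w x ≤ rieszEnergy s w y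

/-- The `N`-point best-packing distance `δ_N(K)`. -/
def bestPackingDist (K : Set A) (N : ℕ) : ℝ :=
  sSup {d : ℝ | ∃ x : Fin N → A, Function.Injective x ∧ (∀ i, x i ∈ K) ∧ d = sepDist x}

/-- The `N`-point mesh norm `ρ_N(K)`. -/
def meshNormN (K : Set A) (N : ℕ) : ℝ :=
  sInf {d : ℝ | ∃ x : Fin N → A, Function.Injective x ∧ (∀ i, x i ∈ K) ∧ d = meshNorm x K}

/-- The minimal `N`-point `(s,w)`-energy `𝓔_s^w(N,K)`. -/
def minEnergy (s : ℝ) (w : A → A → ℝ) (K : Set A) (N : ℕ) : ℝ :=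
  sInf {E : ℝ | ∃ x : Fin N → A, Function.Injective x ∧ (∀ i, x i ∈ K) ∧ E = rieszEnergy s w x}

/-- `μ` is upper `α`-regular with constant `C₀`. -/
def IsUpperRegular [MeasurableSpace A] (μ : Measure A) (α C₀ : ℝ) : Prop :=
  ∀ (x : A) (r : ℝ), 0 < r → r ≤ diam (Set.univ : Set A) →
    μ (closedBall x r) ≤ ENNReal.ofReal (C₀ * r ^ α)

/-- `μ` is lower `α`-regular with constant `c₀`. -/
def IsLowerRegular [MeasurableSpace A] (μ : Measure A) (α c₀ : ℝ) : Prop :=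
  ∀ (x : A) (r : ℝ), 0 < r → r ≤ diam (Set.univ : Set A) →
    ENNReal.ofReal (c₀⁻¹ * r ^ α) ≤ μ (closedBall x r)

/-- `w` is an SLP weight on `K`: symmetric, lower semi-continuous on `K × K`,
nonnegative, and positive on the diagonal. -/
def IsSLPWeight (w : A → A → ℝ) (K : Set A) : Prop :=
  (∀ x ∈ K, ∀ y ∈ K, 0 ≤ w x y) ∧
  (∀ x ∈ K, ∀ y ∈ K, w x y = w y x) ∧
  LowerSemicontinuousOn (fun p : A × A => w p.1 p.2) (K ×ˢ K) ∧
  (∀ x ∈ K, 0 < w x x)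

/-!
Fix `i ≠ j` and choose `r` with `N C₀ r^α = μ(A) (1 - α/s)`. On the set `D` of points at distance
more than `r` from every `x k`, `k ≠ i`, the potential `U(y) = ∑_{k ≠ i} m(y, x k)^(-s)` is at
least `U(x i)`, since moving `x i` to `y` cannot lower the energy. Upper regularity bounds the
measure of the removed balls, so `μ(D) ≥ μ(A) α/s`, and, through the layer-cake formula, it gives
`∫_D U dμ ≤ N C₀ (s/(s-α)) r^(α-s) = μ(A) r^(-s)`. Hence
`m(x i, x j)^(-s) μ(A) α/s ≤ U(x i) μ(D) ≤ μ(A) r^(-s)`, i.e. `m(x i, x j) ≥ (α/s)^(1/s) r`.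
-/

open Finset

def rieszPotential {N : ℕ} (s : ℝ) (x : Fin N → A) (i : Fin N) (y : A) : ℝ :=
  ∑ k ∈ {i}ᶜ, 1 / dist y (x k) ^ s

def farFromOthers {N : ℕ} (x : Fin N → A) (i : Fin N) (r : ℝ) : Set A :=
  ⋂ k ∈ ({i}ᶜ : Finset (Fin N)), (closedBall (x k) r)ᶜ

theorem rieszPotential_nonneg {N : ℕ} (s : ℝ) (x : Fin N → A) (i : Fin N) (y : A) :
    0 ≤ rieszPotential s x i y :=
  sum_nonneg fun _ _ => by positivity

theorem Function.Injective.update_of_forall_ne {α β : Type*} [DecidableEq α] {f : α → β}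
    (hf : Function.Injective f) {a : α} {b : β} (hb : ∀ a', a' ≠ a → b ≠ f a') :
    Function.Injective (Function.update f a b) := by
  intro a₁ a₂ h
  by_cases h₁ : a₁ = a <;> by_cases h₂ : a₂ = a
  · rw [h₁, h₂]
  · subst h₁
    rw [Function.update_self, Function.update_of_ne h₂] at h
    exact absurd h (hb a₂ h₂)
  · subst h₂
    rw [Function.update_self, Function.update_of_ne h₁] at h
    exact absurd h.symm (hb a₁ h₁)
  · rw [Function.update_of_ne h₁, Function.update_of_ne h₂] at h
    exact hf h

theorem rieszEnergy_one_eq_add_rieszPotential {N : ℕ} (s : ℝ) (u : Fin N → A) (i : Fin N) :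
    rieszEnergy s (fun _ _ => 1) u =
      (∑ k ∈ {i}ᶜ, ∑ l ∈ {i}ᶜ, if k = l then 0 else 1 / dist (u k) (u l) ^ s) +
        2 * rieszPotential s u i (u i) := by
  have hrow : ∀ k ∈ ({i}ᶜ : Finset (Fin N)),
      (if k = i then 0 else 1 / dist (u k) (u i) ^ s) = 1 / dist (u i) (u k) ^ s := fun k hk => by
    rw [if_neg (by simpa using hk), dist_comm]
  have hcol : ∀ k ∈ ({i}ᶜ : Finset (Fin N)),
      (if i = k then 0 else 1 / dist (u i) (u k) ^ s) = 1 / dist (u i) (u k) ^ s := fun k hk => by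
    rw [if_neg (by simpa [eq_comm] using hk)]
  unfold rieszEnergy rieszPotential
  simp_rw [Fintype.sum_eq_add_sum_compl i]
  rw [sum_add_distrib, sum_congr rfl hrow, sum_congr rfl hcol, if_pos trivial]
  ring

theorem IsEnergyMinimizer.rieszPotential_self_le {N : ℕ} {s : ℝ} {x : Fin N → A}
    (hx : IsEnergyMinimizer s (fun _ _ => 1) Set.univ x) {i : Fin N} {y : A}
    (hy : ∀ k, k ≠ i → y ≠ x k) :
    rieszPotential s x i (x i) ≤ rieszPotential s x i y := by
  set z := Function.update x i y
  have hz : ∀ k ∈ ({i}ᶜ : Finset (Fin N)), z k = x k := fun k hk =>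
    Function.update_of_ne (by simpa using hk) y x
  have hE := hx.2.2 z (hx.1.update_of_forall_ne hy) fun _ => trivial
  have hothers : (∑ k ∈ {i}ᶜ, ∑ l ∈ {i}ᶜ, if k = l then 0 else 1 / dist (z k) (z l) ^ s) =
      ∑ k ∈ {i}ᶜ, ∑ l ∈ {i}ᶜ, if k = l then 0 else 1 / dist (x k) (x l) ^ s :=
    sum_congr rfl fun k hk => sum_congr rfl fun l hl => by rw [hz k hk, hz l hl]
  have hpot : rieszPotential s z i (z i) = rieszPotential s x i y := by
    rw [rieszPotential, show z i = y from Function.update_self i y x]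
    exact sum_congr rfl fun k hk => by rw [hz k hk]
  rw [rieszEnergy_one_eq_add_rieszPotential s x i, rieszEnergy_one_eq_add_rieszPotential s z i,
    hothers, hpot] at hE
  linarith

theorem le_sepDist {N : ℕ} {x : Fin N → A} {c : ℝ} (hN : 2 ≤ N)
    (h : ∀ i j, i ≠ j → c ≤ dist (x i) (x j)) : c ≤ sepDist x := by
  refine le_csInf ⟨_, ⟨0, by omega⟩, ⟨1, by omega⟩, by simp, rfl⟩ ?_
  rintro _ ⟨i, j, hij, rfl⟩
  exact h i j hij

theorem lintegral_Ioc_ofReal_rpow_neg {q T : ℝ} (hq : q < 1) (hT : 0 ≤ T) :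
    ∫⁻ t in Set.Ioc 0 T, ENNReal.ofReal (t ^ (-q)) = ENNReal.ofReal (T ^ (1 - q) / (1 - q)) := by
  have hq' : -1 < -q := by linarith
  have hint : IntegrableOn (fun t : ℝ => t ^ (-q)) (Set.Ioc 0 T) := by
    simpa [Set.uIoc_of_le hT] using
      intervalIntegrable_iff.mp (intervalIntegral.intervalIntegrable_rpow' hq' (a := 0) (b := T))
  rw [← ofReal_integral_eq_lintegral_ofReal hint
    ((ae_restrict_iff' measurableSet_Ioc).mpr (ae_of_all _ fun t ht => by have := ht.1; positivity)),
    ← intervalIntegral.integral_of_le hT, integral_rpow (Or.inl hq'),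
    Real.zero_rpow (by linarith), sub_zero, neg_add_eq_sub]

section Tail

variable [MeasurableSpace A] {μ : Measure A}

theorem measure_setOf_lt_inv_dist_rpow_inter_compl_le {p : A} {α s C r t : ℝ}
    (hball : ∀ ρ, 0 < ρ → μ (closedBall p ρ) ≤ ENNReal.ofReal (C * ρ ^ α))
    (hs : 0 < s) (hr : 0 < r) (ht : 0 < t) :
    μ ({y | t < 1 / dist y p ^ s} ∩ (closedBall p r)ᶜ) ≤
      (Set.Ioc 0 (r ^ (-s))).indicator (fun t => ENNReal.ofReal (C * t ^ (-(α / s)))) t := by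
  have hlt : ∀ d, 0 < d → (t < 1 / d ^ s ↔ d < t ^ (-s⁻¹)) := fun d hd => by
    rw [Real.rpow_neg ht.le, ← Real.inv_rpow ht.le, one_div,
      Real.lt_rpow_inv_iff_of_pos hd.le (by positivity) hs, lt_inv_comm₀ ht (by positivity)]
  by_cases htr : t ≤ r ^ (-s)
  · rw [Set.indicator_of_mem (Set.mem_Ioc.mpr ⟨ht, htr⟩)]
    calc μ ({y | t < 1 / dist y p ^ s} ∩ (closedBall p r)ᶜ)
        ≤ μ (closedBall p (t ^ (-s⁻¹))) := by
          refine measure_mono fun y hy => ?_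
          have hd : r < dist y p := not_le.mp hy.2
          exact ((hlt _ (hr.trans hd)).mp hy.1).le
      _ ≤ ENNReal.ofReal (C * (t ^ (-s⁻¹)) ^ α) := hball _ (by positivity)
      _ = ENNReal.ofReal (C * t ^ (-(α / s))) := by
          rw [← Real.rpow_mul ht.le, neg_mul, inv_mul_eq_div]
  · rw [Set.indicator_of_notMem fun h => htr h.2, nonpos_iff_eq_zero]
    refine measure_mono_null (fun y ⟨hy, hyr⟩ => ?_) measure_empty
    have hd : r < dist y p := not_le.mp hyr
    have : 1 / dist y p ^ s < r ^ (-s) := by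
      rw [Real.rpow_neg hr.le, ← one_div]
      exact one_div_lt_one_div_of_lt (by positivity) (Real.rpow_lt_rpow hr.le hd hs)
    exact htr (hy.trans this).le

theorem setLIntegral_compl_closedBall_inv_dist_rpow_le [OpensMeasurableSpace A] {p : A}
    {α s C r : ℝ} (hball : ∀ ρ, 0 < ρ → μ (closedBall p ρ) ≤ ENNReal.ofReal (C * ρ ^ α))
    (hC : 0 ≤ C) (hα : 0 < α) (hs : α < s) (hr : 0 < r) :
    ∫⁻ y in (closedBall p r)ᶜ, ENNReal.ofReal (1 / dist y p ^ s) ∂μ ≤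
      ENNReal.ofReal (C * (s / (s - α)) * r ^ (α - s)) := by
  have hs₀ : 0 < s := hα.trans hs
  have hαs : α / s < 1 := (div_lt_one hs₀).mpr hs
  rw [lintegral_eq_lintegral_meas_lt _ (ae_of_all _ fun y => by positivity) (by fun_prop)]
  calc ∫⁻ t in Set.Ioi 0, μ.restrict (closedBall p r)ᶜ {y | t < 1 / dist y p ^ s}
      ≤ ∫⁻ t in Set.Ioi 0,
          (Set.Ioc 0 (r ^ (-s))).indicator (fun t => ENNReal.ofReal (C * t ^ (-(α / s)))) t := by
        refine setLIntegral_mono' measurableSet_Ioi fun t ht => ?_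
        rw [Measure.restrict_apply' measurableSet_closedBall.compl]
        exact measure_setOf_lt_inv_dist_rpow_inter_compl_le hball hs₀ hr ht
    _ = ENNReal.ofReal C * ∫⁻ t in Set.Ioc 0 (r ^ (-s)), ENNReal.ofReal (t ^ (-(α / s))) := by
        rw [setLIntegral_indicator measurableSet_Ioc, Set.Ioc_inter_Ioi, max_self,
          ← lintegral_const_mul' _ _ ENNReal.ofReal_ne_top]
        simp_rw [ENNReal.ofReal_mul hC]
    _ = ENNReal.ofReal (C * (s / (s - α)) * r ^ (α - s)) := by
        have hexp : -s * (1 - α / s) = α - s := by field_simp; ring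
        rw [lintegral_Ioc_ofReal_rpow_neg hαs (by positivity), ← ENNReal.ofReal_mul hC,
          ← Real.rpow_mul hr.le, hexp]
        congr 1
        field_simp

end Tail

section Configuration

variable [MeasurableSpace A] {μ : Measure A} {N : ℕ}

theorem measureReal_univ_sub_le_measureReal_farFromOthers [IsFiniteMeasure μ] {r b : ℝ}
    (hb : 0 ≤ b) (hball : ∀ p, μ (closedBall p r) ≤ ENNReal.ofReal b) (x : Fin N → A)
    (i : Fin N) : μ.real Set.univ - N * b ≤ μ.real (farFromOthers x i r) := by
  have hcompl : μ (farFromOthers x i r)ᶜ ≤ ENNReal.ofReal (N * b) := by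
    rw [farFromOthers, Set.compl_iInter₂]
    simp_rw [compl_compl]
    calc μ (⋃ k ∈ ({i}ᶜ : Finset (Fin N)), closedBall (x k) r)
        ≤ ∑ k ∈ {i}ᶜ, μ (closedBall (x k) r) := measure_biUnion_finset_le _ _
      _ ≤ ∑ _k : Fin N, ENNReal.ofReal b :=
          (sum_le_sum fun k _ => hball (x k)).trans (sum_le_sum_of_subset (subset_univ _))
      _ = ENNReal.ofReal (N * b) := by simp [ENNReal.ofReal_mul]
  have h := (measure_univ_le_add_compl (μ := μ) (farFromOthers x i r)).trans
    (add_le_add le_rfl hcompl)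
  rw [← ofReal_measureReal, ← ofReal_measureReal, ← ENNReal.ofReal_add measureReal_nonneg
    (by positivity), ENNReal.ofReal_le_ofReal_iff (by positivity)] at h
  linarith

theorem setLIntegral_farFromOthers_rieszPotential_le [OpensMeasurableSpace A] {α s C r : ℝ}
    (hball : ∀ p ρ, 0 < ρ → μ (closedBall p ρ) ≤ ENNReal.ofReal (C * ρ ^ α))
    (hC : 0 ≤ C) (hα : 0 < α) (hs : α < s) (hr : 0 < r) (x : Fin N → A) (i : Fin N) :
    ∫⁻ y in farFromOthers x i r, ENNReal.ofReal (rieszPotential s x i y) ∂μ ≤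
      N * ENNReal.ofReal (C * (s / (s - α)) * r ^ (α - s)) := by
  calc ∫⁻ y in farFromOthers x i r, ENNReal.ofReal (rieszPotential s x i y) ∂μ
      = ∑ k ∈ {i}ᶜ, ∫⁻ y in farFromOthers x i r, ENNReal.ofReal (1 / dist y (x k) ^ s) ∂μ := by
        have hsplit : ∀ y, ENNReal.ofReal (rieszPotential s x i y) =
            ∑ k ∈ {i}ᶜ, ENNReal.ofReal (1 / dist y (x k) ^ s) := fun y =>
          ENNReal.ofReal_sum_of_nonneg fun k _ => by positivity
        simp_rw [hsplit]
        exact lintegral_finsetSum' _ fun k _ => by fun_prop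
    _ ≤ ∑ _k : Fin N, ENNReal.ofReal (C * (s / (s - α)) * r ^ (α - s)) := by
        refine (sum_le_sum fun k hk => ?_).trans (sum_le_sum_of_subset (subset_univ _))
        exact (lintegral_mono_set (Set.biInter_subset_of_mem hk)).trans
          (setLIntegral_compl_closedBall_inv_dist_rpow_le (hball (x k)) hC hα hs hr)
    _ = N * ENNReal.ofReal (C * (s / (s - α)) * r ^ (α - s)) := by simp

theorem IsEnergyMinimizer.rieszPotential_mul_measureReal_le [OpensMeasurableSpace A]
    [IsFiniteMeasure μ] {x : Fin N → A} {α s C r : ℝ}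
    (hx : IsEnergyMinimizer s (fun _ _ => 1) Set.univ x)
    (hball : ∀ p ρ, 0 < ρ → μ (closedBall p ρ) ≤ ENNReal.ofReal (C * ρ ^ α))
    (hC : 0 ≤ C) (hα : 0 < α) (hs : α < s) (hr : 0 < r) (i : Fin N) :
    rieszPotential s x i (x i) * μ.real (farFromOthers x i r) ≤
      N * (C * (s / (s - α)) * r ^ (α - s)) := by
  have hs₀ : 0 < s := hα.trans hs
  have hsα : 0 < s - α := sub_pos.mpr hs
  have hmeas : MeasurableSet (farFromOthers x i r) :=
    Finset.measurableSet_biInter _ fun k _ => measurableSet_closedBall.compl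
  rw [← ENNReal.ofReal_le_ofReal_iff (by positivity),
    ENNReal.ofReal_mul (rieszPotential_nonneg s x i _), ofReal_measureReal,
    ENNReal.ofReal_mul (Nat.cast_nonneg _), ENNReal.ofReal_natCast, ← setLIntegral_const]
  refine (setLIntegral_mono' hmeas fun y hy => ENNReal.ofReal_le_ofReal ?_).trans
    (setLIntegral_farFromOthers_rieszPotential_le hball hC hα hs hr x i)
  refine hx.rieszPotential_self_le fun k hk hyk => Set.mem_iInter₂.mp hy k (by simpa using hk) ?_
  rw [hyk]
  exact mem_closedBall_self hr.le

theorem IsEnergyMinimizer.rpow_mul_le_dist [OpensMeasurableSpace A] [IsFiniteMeasure μ]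
    {x : Fin N → A} {α s C r : ℝ} (hx : IsEnergyMinimizer s (fun _ _ => 1) Set.univ x)
    (hball : ∀ p ρ, 0 < ρ → μ (closedBall p ρ) ≤ ENNReal.ofReal (C * ρ ^ α))
    (hC : 0 ≤ C) (hα : 0 < α) (hs : α < s) (hμ : 0 < μ.real Set.univ) (hr : 0 < r)
    (hrN : N * (C * r ^ α) ≤ μ.real Set.univ * (1 - α / s)) {i j : Fin N} (hij : i ≠ j) :
    (α / s) ^ (1 / s) * r ≤ dist (x i) (x j) := by
  set m := μ.real Set.univ
  have hs₀ : 0 < s := hα.trans hs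
  have hsα : 0 < s - α := sub_pos.mpr hs
  have hd : 0 < dist (x i) (x j) := dist_pos.mpr (hx.1.ne hij)
  have hfar : m * (α / s) ≤ μ.real (farFromOthers x i r) := by
    have := measureReal_univ_sub_le_measureReal_farFromOthers (by positivity)
      (fun p => hball p r hr) x i (μ := μ)
    linarith
  have hK : N * (C * (s / (s - α)) * r ^ (α - s)) ≤ m / r ^ s := by
    calc N * (C * (s / (s - α)) * r ^ (α - s)) = N * (C * r ^ α) * (s / (s - α)) / r ^ s := by
          rw [Real.rpow_sub hr]; ring
      _ ≤ m * (1 - α / s) * (s / (s - α)) / r ^ s := by gcongr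
      _ = m / r ^ s := by field_simp
  have hterm : 1 / dist (x i) (x j) ^ s ≤ rieszPotential s x i (x i) :=
    single_le_sum (f := fun k => 1 / dist (x i) (x k) ^ s) (fun k _ => by positivity)
      (by simpa using hij.symm)
  have hkey : 1 / dist (x i) (x j) ^ s * (m * (α / s)) ≤ m / r ^ s :=
    calc 1 / dist (x i) (x j) ^ s * (m * (α / s))
        ≤ rieszPotential s x i (x i) * μ.real (farFromOthers x i r) :=
          mul_le_mul hterm hfar (by positivity) (rieszPotential_nonneg s x i _)
      _ ≤ N * (C * (s / (s - α)) * r ^ (α - s)) :=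
          hx.rieszPotential_mul_measureReal_le hball hC hα hs hr i
      _ ≤ m / r ^ s := hK
  have hpow : α / s * r ^ s ≤ dist (x i) (x j) ^ s := by
    rw [one_div_mul_eq_div, div_le_div_iff₀ (by positivity) (by positivity)] at hkey
    nlinarith
  calc (α / s) ^ (1 / s) * r = (α / s * r ^ s) ^ (1 / s) := by
        rw [Real.mul_rpow (by positivity) (by positivity), ← Real.rpow_mul hr.le,
          mul_one_div_cancel hs₀.ne', Real.rpow_one]
    _ ≤ (dist (x i) (x j) ^ s) ^ (1 / s) := by gcongr
    _ = dist (x i) (x j) := by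
        rw [← Real.rpow_mul hd.le, mul_one_div_cancel hs₀.ne', Real.rpow_one]

end Configuration

section UpperRegular

variable [MeasurableSpace A] [CompactSpace A] {μ : Measure A} {α C₀ : ℝ}

theorem IsUpperRegular.measure_univ_le [Nonempty A] (hreg : IsUpperRegular μ α C₀)
    (hdiam : 0 < diam (Set.univ : Set A)) :
    μ Set.univ ≤ ENNReal.ofReal (C₀ * diam (Set.univ : Set A) ^ α) := by
  inhabit A
  refine le_trans (measure_mono fun y _ => ?_) (hreg default _ hdiam le_rfl)
  exact mem_closedBall.mpr (dist_le_diam_of_mem BoundedSpace.bounded_univ trivial trivial)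

theorem IsUpperRegular.measure_closedBall_le (hreg : IsUpperRegular μ α C₀) (hα : 0 ≤ α)
    (hC₀ : 0 ≤ C₀) (hdiam : 0 < diam (Set.univ : Set A)) (p : A) {ρ : ℝ} (hρ : 0 < ρ) :
    μ (closedBall p ρ) ≤ ENNReal.ofReal (C₀ * ρ ^ α) := by
  rcases le_or_gt ρ (diam (Set.univ : Set A)) with hle | hlt
  · exact hreg p ρ hρ hle
  · have : Nonempty A := ⟨p⟩
    calc μ (closedBall p ρ) ≤ μ Set.univ := measure_mono (Set.subset_univ _)
      _ ≤ ENNReal.ofReal (C₀ * diam (Set.univ : Set A) ^ α) := hreg.measure_univ_le hdiam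
      _ ≤ ENNReal.ofReal (C₀ * ρ ^ α) := by gcongr

end UpperRegular

theorem stmt_2_general {A : Type*} [MetricSpace A] [CompactSpace A]
    [MeasurableSpace A] [BorelSpace A]
    (α : ℝ) (hα : 0 < α) (μ : Measure A) (C₀ : ℝ)
    (hreg : IsUpperRegular μ α C₀) (hμpos : 0 < μ Set.univ)
    (s : ℝ) (hs : α < s)
    (N : ℕ) (hN : 2 ≤ N) (x : Fin N → A)
    (hx : IsEnergyMinimizer s (fun _ _ => (1 : ℝ)) Set.univ x) :
    sepDist x ≥ ((μ Set.univ).toReal / C₀ * (1 - α / s)) ^ (1 / α) *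
      (α / s) ^ (1 / s) * (N : ℝ) ^ (-(1 / α)) := by
  have hx₀₁ : x ⟨0, by omega⟩ ≠ x ⟨1, by omega⟩ := hx.1.ne (by simp)
  have : Nonempty A := ⟨x ⟨0, by omega⟩⟩
  have hdiam : 0 < diam (Set.univ : Set A) := (dist_pos.mpr hx₀₁).trans_le
    (dist_le_diam_of_mem BoundedSpace.bounded_univ trivial trivial)
  have hμle := hreg.measure_univ_le hdiam
  have hC₀ : 0 < C₀ :=
    pos_of_mul_pos_left (ENNReal.ofReal_pos.mp (hμpos.trans_le hμle)) (by positivity)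
  have : IsFiniteMeasure μ := ⟨hμle.trans_lt ENNReal.ofReal_lt_top⟩
  rw [← measureReal_def]
  set m := μ.real Set.univ
  have hm : 0 < m := ENNReal.toReal_pos hμpos.ne' (measure_ne_top _ _)
  have hαs : 0 < 1 - α / s := sub_pos.mpr ((div_lt_one (hα.trans hs)).mpr hs)
  set r := (m / C₀ * (1 - α / s)) ^ (1 / α) * (N : ℝ) ^ (-(1 / α))
  have hr : 0 < r := by positivity
  have hrN : N * (C₀ * r ^ α) = m * (1 - α / s) := by
    rw [Real.mul_rpow (by positivity) (by positivity), ← Real.rpow_mul (by positivity),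
      ← Real.rpow_mul (by positivity), one_div_mul_cancel hα.ne', neg_mul,
      one_div_mul_cancel hα.ne', Real.rpow_one, Real.rpow_neg_one]
    field_simp
  rw [ge_iff_le, show (m / C₀ * (1 - α / s)) ^ (1 / α) * (α / s) ^ (1 / s) * (N : ℝ) ^ (-(1 / α))
    = (α / s) ^ (1 / s) * r by ring]
  exact le_sepDist hN fun i j hij => hx.rpow_mul_le_dist
    (fun p ρ hρ => hreg.measure_closedBall_le hα.le hC₀.le hdiam p hρ) hC₀.le hα hs hm hr hrN.le hij

/-- explicit separation constant for unweighted minimal Riesz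
`s`-energy configurations on an upper `α`-regular compact metric space. -/
theorem stmt_2 {A : Type*} [MetricSpace A] [CompactSpace A] [Infinite A]
    [MeasurableSpace A] [BorelSpace A]
    (α : ℝ) (hα : 0 < α) (μ : Measure A) (C₀ : ℝ)
    (hreg : IsUpperRegular μ α C₀) (hμpos : 0 < μ Set.univ)
    (s : ℝ) (hs : α < s)
    (N : ℕ) (hN : 2 ≤ N) (x : Fin N → A)
    (hx : IsEnergyMinimizer s (fun _ _ => (1 : ℝ)) Set.univ x) :
    sepDist x ≥ ((μ Set.univ).toReal / C₀ * (1 - α / s)) ^ (1 / α) *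
      (α / s) ^ (1 / s) * (N : ℝ) ^ (-(1 / α)) :=
  stmt_2_general α hα μ C₀ hreg hμpos s hs N hN x hx
end
end

section
/- Let A be a compact infinite metric space, and for each s > 0 and N ≥ 2 let ω_N^s be an N-point configuration minimizing the unweighted Riesz s-energy over N-point subsets of A. Then (N(N−1))^{−1/s} δ_N(A) ≤ δ(ω_N^s) ≤ δ_N(A) for all s > 0, and consequently lim_{s→∞} δ(ω_N^s) = δ_N(A). -/
open Metric MeasureTheory Filter
open scoped ENNReal NNReal

noncomputable section

variable {A : Type*} [MetricSpace A]

/-!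
If `ω` minimizes the Riesz `s`-energy and `y` is any `N`-point configuration, then
`δ(ω)^{-s} ≤ E_s(ω) ≤ E_s(y) ≤ N(N-1) δ(y)^{-s}`, since the energy contains the term of the
closest pair and each of its `N(N-1)` terms is at most `δ^{-s}`. Taking `-1/s`-th powers and
the supremum over `y` gives `(N(N-1))^{-1/s} δ_N(A) ≤ δ(ω)`; the upper bound holds because `ω`
competes in the packing problem, and `(N(N-1))^{-1/s} → 1` as `s → ∞`.
-/

lemma natCast_mul_natCast_sub_one_pos {N : ℕ} (hN : 2 ≤ N) : 0 < (N : ℝ) * (N - 1) := by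
  have : (2 : ℝ) ≤ N := by exact_mod_cast hN
  nlinarith

section

variable {A : Type*} [MetricSpace A] {N : ℕ}

lemma exists_sepDist_eq_dist (hN : 2 ≤ N) (x : Fin N → A) :
    ∃ i j : Fin N, i ≠ j ∧ sepDist x = dist (x i) (x j) := by
  have hfin : {d : ℝ | ∃ i j : Fin N, i ≠ j ∧ d = dist (x i) (x j)}.Finite :=
    (Set.finite_range fun p : Fin N × Fin N => dist (x p.1) (x p.2)).subset
      (by rintro _ ⟨i, j, -, rfl⟩; exact ⟨(i, j), rfl⟩)
  have hne : {d : ℝ | ∃ i j : Fin N, i ≠ j ∧ d = dist (x i) (x j)}.Nonempty :=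
    ⟨_, ⟨0, by omega⟩, ⟨1, by omega⟩, by simp [Fin.ext_iff], rfl⟩
  exact hne.csInf_mem hfin

lemma sepDist_le_dist (x : Fin N → A) {i j : Fin N} (h : i ≠ j) :
    sepDist x ≤ dist (x i) (x j) :=
  csInf_le ⟨0, by rintro _ ⟨i, j, -, rfl⟩; exact dist_nonneg⟩ ⟨i, j, h, rfl⟩

lemma sepDist_pos (hN : 2 ≤ N) {x : Fin N → A} (hx : Function.Injective x) :
    0 < sepDist x := by
  obtain ⟨i, j, hij, heq⟩ := exists_sepDist_eq_dist hN x
  exact heq ▸ dist_pos.2 (hx.ne hij)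

lemma sepDist_rpow_neg_le_rieszEnergy (hN : 2 ≤ N) (s : ℝ) (x : Fin N → A) :
    sepDist x ^ (-s) ≤ rieszEnergy s (fun _ _ => (1 : ℝ)) x := by
  obtain ⟨i, j, hij, heq⟩ := exists_sepDist_eq_dist hN x
  have hterm : ∀ a b : Fin N,
      0 ≤ if a = b then (0 : ℝ) else 1 / dist (x a) (x b) ^ s := by
    intro a b; split_ifs <;> positivity
  calc sepDist x ^ (-s)
      = if i = j then 0 else 1 / dist (x i) (x j) ^ s := by
        rw [if_neg hij, heq, Real.rpow_neg dist_nonneg, one_div]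
    _ ≤ ∑ b, if i = b then 0 else 1 / dist (x i) (x b) ^ s :=
        Finset.single_le_sum (fun b _ => hterm i b) (Finset.mem_univ j)
    _ ≤ rieszEnergy s (fun _ _ => (1 : ℝ)) x :=
        Finset.single_le_sum (fun a _ => Finset.sum_nonneg fun b _ => hterm a b)
          (Finset.mem_univ i)

lemma rieszEnergy_le_mul_sepDist_rpow_neg (hN : 2 ≤ N) {s : ℝ} (hs : 0 ≤ s)
    {x : Fin N → A} (hx : Function.Injective x) :
    rieszEnergy s (fun _ _ => (1 : ℝ)) x ≤ (N * (N - 1)) * sepDist x ^ (-s) := by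
  have hsep := sepDist_pos hN hx
  calc rieszEnergy s (fun _ _ => (1 : ℝ)) x
      ≤ ∑ i : Fin N, ∑ j : Fin N, if i = j then 0 else sepDist x ^ (-s) := by
        refine Finset.sum_le_sum fun i _ => Finset.sum_le_sum fun j _ => ?_
        split_ifs with hij
        · rfl
        · rw [one_div, ← Real.rpow_neg dist_nonneg]
          exact Real.rpow_le_rpow_of_nonpos hsep (sepDist_le_dist x hij) (neg_nonpos.2 hs)
    _ = (N * (N - 1)) * sepDist x ^ (-s) := by
        simp [Finset.sum_ite, Finset.filter_ne, Nat.cast_sub (by omega : 1 ≤ N), mul_assoc]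

lemma sepDist_le_bestPackingDist {K : Set A} (hK : Bornology.IsBounded K) (hN : 2 ≤ N)
    {x : Fin N → A} (hx : Function.Injective x) (hxK : ∀ i, x i ∈ K) :
    sepDist x ≤ bestPackingDist K N := by
  refine le_csSup ⟨diam K, ?_⟩ ⟨x, hx, hxK, rfl⟩
  rintro _ ⟨y, -, hyK, rfl⟩
  obtain ⟨i, j, -, heq⟩ := exists_sepDist_eq_dist hN y
  exact heq ▸ dist_le_diam_of_mem hK (hyK i) (hyK j)

lemma bestPackingDist_le {K : Set A} (hK : K.Infinite) {r : ℝ}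
    (h : ∀ x : Fin N → A, Function.Injective x → (∀ i, x i ∈ K) → sepDist x ≤ r) :
    bestPackingDist K N ≤ r := by
  have := hK.to_subtype
  let e : Fin N ↪ K := Fin.valEmbedding.trans (Infinite.natEmbedding K)
  refine csSup_le ⟨_, fun i => e i, Subtype.val_injective.comp e.injective,
    fun i => (e i).2, rfl⟩ ?_
  rintro _ ⟨x, hx, hxK, rfl⟩
  exact h x hx hxK

lemma rpow_neg_one_div_mul_sepDist_le_of_isEnergyMinimizer (hN : 2 ≤ N) {s : ℝ} (hs : 0 < s)
    {K : Set A} {x y : Fin N → A} (hx : IsEnergyMinimizer s (fun _ _ => (1 : ℝ)) K x)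
    (hy : Function.Injective y) (hyK : ∀ i, y i ∈ K) :
    ((N : ℝ) * (N - 1)) ^ (-(1 / s)) * sepDist y ≤ sepDist x := by
  have hc := (natCast_mul_natCast_sub_one_pos hN).le
  have hδx := sepDist_pos hN hx.1
  have hδy := sepDist_pos hN hy
  have hexp : -s * -(1 / s) = 1 := by field_simp
  have henergy : sepDist x ^ (-s) ≤ (N * (N - 1)) * sepDist y ^ (-s) :=
    (sepDist_rpow_neg_le_rieszEnergy hN s x).trans
      ((hx.2.2 y hy hyK).trans (rieszEnergy_le_mul_sepDist_rpow_neg hN hs.le hy))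
  calc ((N : ℝ) * (N - 1)) ^ (-(1 / s)) * sepDist y
      = ((N * (N - 1)) * sepDist y ^ (-s)) ^ (-(1 / s)) := by
        rw [Real.mul_rpow hc (by positivity), ← Real.rpow_mul hδy.le, hexp, Real.rpow_one]
    _ ≤ (sepDist x ^ (-s)) ^ (-(1 / s)) :=
        Real.rpow_le_rpow_of_nonpos (by positivity) henergy (neg_nonpos.2 (by positivity))
    _ = sepDist x := by rw [← Real.rpow_mul hδx.le, hexp, Real.rpow_one]

lemma rpow_neg_one_div_mul_bestPackingDist_le_sepDist (hN : 2 ≤ N) {s : ℝ} (hs : 0 < s)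
    {K : Set A} (hK : K.Infinite) {x : Fin N → A}
    (hx : IsEnergyMinimizer s (fun _ _ => (1 : ℝ)) K x) :
    ((N : ℝ) * (N - 1)) ^ (-(1 / s)) * bestPackingDist K N ≤ sepDist x := by
  have ht := Real.rpow_pos_of_pos (natCast_mul_natCast_sub_one_pos hN) (-(1 / s))
  rw [← le_div_iff₀' ht]
  exact bestPackingDist_le hK fun y hy hyK =>
    (le_div_iff₀' ht).2 (rpow_neg_one_div_mul_sepDist_le_of_isEnergyMinimizer hN hs hx hy hyK)

end

lemma tendsto_rpow_neg_one_div_atTop {c : ℝ} (hc : c ≠ 0) :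
    Tendsto (fun s : ℝ => c ^ (-(1 / s))) atTop (nhds 1) := by
  have h0 : Tendsto (fun s : ℝ => -(1 / s)) atTop (nhds 0) := by
    simpa only [one_div, neg_zero] using (tendsto_inv_atTop_zero (𝕜 := ℝ)).neg
  simpa only [Real.rpow_zero, Function.comp_def] using
    (Real.continuousAt_const_rpow hc).tendsto.comp h0

/-- separation of unweighted minimal `s`-energy configurations is
squeezed between `(N(N-1))^{-1/s} δ_N(A)` and `δ_N(A)`, and converges to the
best-packing distance as `s → ∞`. -/
theorem stmt_13 {A : Type*} [MetricSpace A] [CompactSpace A] [Infinite A]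
    (N : ℕ) (hN : 2 ≤ N) (ω : ℝ → Fin N → A)
    (hω : ∀ s : ℝ, 0 < s → IsEnergyMinimizer s (fun _ _ => (1 : ℝ)) Set.univ (ω s)) :
    (∀ s : ℝ, 0 < s →
      ((N : ℝ) * ((N : ℝ) - 1)) ^ (-(1 / s)) * bestPackingDist (Set.univ : Set A) N ≤
          sepDist (ω s) ∧
        sepDist (ω s) ≤ bestPackingDist (Set.univ : Set A) N) ∧
    Tendsto (fun s : ℝ => sepDist (ω s)) atTop
      (nhds (bestPackingDist (Set.univ : Set A) N)) := by
  have bounds : ∀ s : ℝ, 0 < s →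
      ((N : ℝ) * ((N : ℝ) - 1)) ^ (-(1 / s)) * bestPackingDist (Set.univ : Set A) N ≤
          sepDist (ω s) ∧
        sepDist (ω s) ≤ bestPackingDist (Set.univ : Set A) N := fun s hs =>
    ⟨rpow_neg_one_div_mul_bestPackingDist_le_sepDist hN hs Set.infinite_univ (hω s hs),
      sepDist_le_bestPackingDist isCompact_univ.isBounded hN (hω s hs).1 fun _ => trivial⟩
  have hlower :=
    (tendsto_rpow_neg_one_div_atTop (natCast_mul_natCast_sub_one_pos hN).ne').mul_const
      (bestPackingDist (Set.univ : Set A) N)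
  rw [one_mul] at hlower
  refine ⟨bounds, tendsto_of_tendsto_of_tendsto_of_le_of_le' hlower tendsto_const_nhds ?_ ?_⟩
  · filter_upwards [eventually_gt_atTop 0] with s hs using (bounds s hs).1
  · filter_upwards [eventually_gt_atTop 0] with s hs using (bounds s hs).2
end
end
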